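/- Power series expansion for v-slice regular functions on the unit ball: If f ∈ 𝒮ℛ_v(𝔹⁴(0,1)) then there exists a sequence of quaternions (aₙ) such that f(q) = Σ_{n=0}^∞ Σ_{k=0}^n q^{n-k} (v q̄ + q v̄)^k · ((-1)^k a_{n-k})/(2^k k!) for all q in the open unit ball of ℍ. -/

import Mathlib

open Quaternion

noncomputable section

/-- Real Euclidean inner product on the quaternions (sum of products of components). -/
def qinner (q v : ℍ[ℝ]) : ℝ :=
  q.re * v.re + q.imI * v.imI + q.imJ * v.imJ + q.imK * v.imK

/-- The sphere of purely imaginary unit quaternions. -/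
def Sph2 : Set ℍ[ℝ] := {i | i.re = 0 ∧ ‖i‖ = 1}

/-- The complex slice plane `ℂ(i) = {x + y i : x, y ∈ ℝ}`. -/
def slicePlane (i : ℍ[ℝ]) : Set ℍ[ℝ] := {z | ∃ x y : ℝ, z = (x : ℍ[ℝ]) + y • i}

/-- The slice Cauchy–Riemann operator `∂/∂ z̄_i = (1/2)(∂/∂x + i ∂/∂y)`. -/
def dbar (i : ℍ[ℝ]) (f : ℍ[ℝ] → ℍ[ℝ]) (q : ℍ[ℝ]) : ℍ[ℝ] :=
  (1 / 2 : ℝ) • (fderiv ℝ f q 1 + i * fderiv ℝ f q i)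

/-- Slice regular functions on `Ω`. -/
def SliceRegularOn (f : ℍ[ℝ] → ℍ[ℝ]) (Ω : Set ℍ[ℝ]) : Prop :=
  ContDiffOn ℝ 1 f Ω ∧ ∀ i ∈ Sph2, ∀ q ∈ Ω ∩ slicePlane i, dbar i f q = 0

/-- `v`-slice regular functions on `Ω`. -/
def VSliceRegularOn (v : ℍ[ℝ]) (f : ℍ[ℝ] → ℍ[ℝ]) (Ω : Set ℍ[ℝ]) : Prop :=
  ContDiffOn ℝ 1 f Ω ∧ ∀ i ∈ Sph2, ∀ q ∈ Ω ∩ slicePlane i,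
    dbar i f q + (1 / 4 : ℝ) • ((v - i * v * i) * f q) = 0

/-- Axially symmetric slice domain. -/
def AxSymSliceDomain (Ω : Set ℍ[ℝ]) : Prop :=
  IsOpen Ω ∧ IsConnected Ω ∧ (∃ r : ℝ, (r : ℍ[ℝ]) ∈ Ω) ∧
  (∀ i ∈ Sph2, IsConnected (Ω ∩ slicePlane i)) ∧
  (∀ (x y : ℝ), ∀ i ∈ Sph2, (x : ℍ[ℝ]) + y • i ∈ Ω → ∀ j ∈ Sph2, (x : ℍ[ℝ]) + y • j ∈ Ω)

/-
Multiplying by `exp ⟨q, v⟩` turns the `v`-slice regular `f` into a slice regular `g`: the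
derivative of the exponential factor contributes exactly the zeroth-order term `¼ (v - i v i) f`.
On the standard slice `ℂ ⊂ ℍ` the splitting `ℍ = ℂ ⊕ ℂ j` makes `g` a pair of holomorphic
functions, hence `g z = ∑ zⁿ bₙ`. Every quaternion is conjugate to a complex number,
`q = w z w⁻¹`, and `w⁻¹ g (w · w⁻¹)` is slice regular again; on the real axis it equals `w⁻¹ g`,
so uniqueness of real power series identifies its coefficients as `w⁻¹ aₙ`, giving
`g q = ∑ qⁿ aₙ` on the whole ball. Finally `f = exp (-⟨q, v⟩) g` and `v q̄ + q v̄ = 2 ⟨q, v⟩` is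
real, so the double series is the Cauchy product of `∑ (-⟨q, v⟩)ᵏ / k!` with `∑ qⁿ aₙ`.
-/

open Metric Set
open scoped RealInnerProductSpace NNReal

theorem DifferentiableOn.hasFPowerSeriesOnBall_of_ball {E : Type*} [NormedAddCommGroup E]
    [NormedSpace ℂ E] [CompleteSpace E] {f : ℂ → E} {c : ℂ} {r R : ℝ≥0} (hr : 0 < r)
    (hrR : r < R) (hf : DifferentiableOn ℂ f (ball c R)) :
    HasFPowerSeriesOnBall f (cauchyPowerSeries f c r) c R := by
  have hsmall : ∀ s : ℝ≥0, 0 < s → s < R →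
      HasFPowerSeriesOnBall f (cauchyPowerSeries f c r) c s := by
    intro s hs hsR
    have h_s := (hf.mono (closedBall_subset_ball hsR)).hasFPowerSeriesOnBall hs
    have h_r := (hf.mono (closedBall_subset_ball hrR)).hasFPowerSeriesOnBall hr
    rwa [h_s.hasFPowerSeriesAt.eq_formalMultilinearSeries h_r.hasFPowerSeriesAt] at h_s
  refine ⟨ENNReal.le_of_forall_nnreal_lt fun s hs => ?_, (ENNReal.coe_pos.2 hr).trans
    (ENNReal.coe_lt_coe.2 hrR), fun {y} hy => ?_⟩
  · rcases eq_zero_or_pos s with rfl | hs0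
    · exact zero_le
    · exact (hsmall s hs0 (ENNReal.coe_lt_coe.1 hs)).r_le
  · obtain ⟨s, hys, hsR⟩ := exists_between (mem_eball_zero_iff.1 hy)
    lift s to ℝ≥0 using hsR.ne_top
    exact (hsmall s (ENNReal.coe_pos.1 (zero_le.trans_lt hys)) (ENNReal.coe_lt_coe.1 hsR)).hasSum
      (mem_eball_zero_iff.2 hys)

section RealPowerSeries

variable {E : Type*} [NormedAddCommGroup E] [NormedSpace ℝ E]

theorem hasFPowerSeriesOnBall_mkPiRing {b : ℕ → E} {g : ℝ → E} {R : ℝ≥0} (hR : 0 < R)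
    (hb : ∀ x : ℝ, ‖x‖ < R →
      Summable (fun n => ‖x ^ n • b n‖) ∧ HasSum (fun n => x ^ n • b n) (g x)) :
    HasFPowerSeriesOnBall g (fun n => ContinuousMultilinearMap.mkPiRing ℝ (Fin n) (b n)) 0 R := by
  refine ⟨ENNReal.le_of_forall_nnreal_lt fun s hs => ?_, ENNReal.coe_pos.2 hR, fun {y} hy => ?_⟩
  · refine FormalMultilinearSeries.le_radius_of_summable_norm _ ?_
    have hs' : ‖(s : ℝ)‖ < R := by
      rwa [NNReal.norm_eq, NNReal.coe_lt_coe, ← ENNReal.coe_lt_coe]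
    simpa [ContinuousMultilinearMap.norm_mkPiRing, norm_smul, mul_comm] using (hb s hs').1
  · have hy' : ‖y‖ < R := by
      rwa [mem_eball_zero_iff, enorm_lt_coe, ← NNReal.coe_lt_coe, coe_nnnorm] at hy
    simpa [ContinuousMultilinearMap.mkPiRing_apply] using (hb y hy').2

theorem eq_of_hasSum_pow_smul {b c : ℕ → E} {g : ℝ → E} {R : ℝ≥0} (hR : 0 < R)
    (hb : ∀ x : ℝ, ‖x‖ < R →
      Summable (fun n => ‖x ^ n • b n‖) ∧ HasSum (fun n => x ^ n • b n) (g x))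
    (hc : ∀ x : ℝ, ‖x‖ < R →
      Summable (fun n => ‖x ^ n • c n‖) ∧ HasSum (fun n => x ^ n • c n) (g x)) :
    b = c := by
  have h := (hasFPowerSeriesOnBall_mkPiRing hR hb).hasFPowerSeriesAt.eq_formalMultilinearSeries
    (hasFPowerSeriesOnBall_mkPiRing hR hc).hasFPowerSeriesAt
  funext n
  simpa [FormalMultilinearSeries.coeff] using congrArg (fun p => p.coeff n) h

end RealPowerSeries

theorem exp_smul_tsum_eq_tsum_sum_range {A : Type*} [NormedRing A] [NormedAlgebra ℝ A]
    [NormOneClass A] [CompleteSpace A] {x : ℕ → A} (hx : Summable fun n => ‖x n‖) (s : ℝ) :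
    Real.exp s • ∑' n, x n =
      ∑' n, ∑ k ∈ Finset.range (n + 1), (s ^ k / k.factorial) • x (n - k) := by
  have hexp : HasSum (fun k => algebraMap ℝ A (s ^ k / k.factorial))
      (algebraMap ℝ A (Real.exp s)) := by
    rw [Real.exp_eq_exp_ℝ]
    exact (NormedSpace.expSeries_div_hasSum_exp s).map (algebraMap ℝ A) (continuous_algebraMap ℝ A)
  have hnorm : Summable fun k => ‖algebraMap ℝ A (s ^ k / k.factorial)‖ := by
    simpa only [norm_algebraMap'] using NormedSpace.norm_expSeries_div_summable s
  rw [Algebra.smul_def, ← hexp.tsum_eq, tsum_mul_tsum_eq_tsum_sum_range_of_summable_norm hnorm hx]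
  simp only [Algebra.smul_def]

theorem qinner_eq_inner (q v : ℍ) : qinner q v = ⟪q, v⟫ := by
  simp [qinner, Quaternion.inner_def]

theorem mul_star_add_mul_star (q v : ℍ) : v * star q + q * star v = ((2 * qinner q v : ℝ) : ℍ) := by
  rw [qinner_eq_inner, Quaternion.inner_def, ← Quaternion.self_add_star', star_mul, star_star,
    add_comm]

theorem normSq_eq_one_of_mem_Sph2 {i : ℍ} (hi : i ∈ Sph2) : Quaternion.normSq i = 1 := by
  rw [Quaternion.normSq_eq_norm_mul_self, hi.2, one_mul]

theorem sub_mul_mul_eq_of_mem_Sph2 {i : ℍ} (hi : i ∈ Sph2) (u : ℍ) :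
    u - i * u * i = ((2 * u.re : ℝ) : ℍ) + (2 * qinner i u) • i := by
  have h1 := normSq_eq_one_of_mem_Sph2 hi
  rw [Quaternion.normSq_def', hi.1] at h1
  ext <;> simp [Quaternion.re_mul, Quaternion.imI_mul, Quaternion.imJ_mul, Quaternion.imK_mul, hi.1,
    qinner]
  · linear_combination u.re * h1
  · linear_combination -u.imI * h1
  · linear_combination -u.imJ * h1
  · linear_combination -u.imK * h1

theorem dbar_smul {h : ℍ → ℝ} {f : ℍ → ℍ} {q : ℍ} (hh : DifferentiableAt ℝ h q)
    (hf : DifferentiableAt ℝ f q) (i : ℍ) :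
    dbar i (fun p => h p • f p) q =
      h q • dbar i f q + ((1 / 2 : ℝ) • ((fderiv ℝ h q 1 : ℍ) + fderiv ℝ h q i • i)) * f q := by
  simp only [dbar, fderiv_fun_smul hh hf, add_apply, smul_apply,
    ContinuousLinearMap.smulRight_apply, mul_add, mul_smul_comm, add_mul, smul_mul_assoc,
    Quaternion.coe_mul_eq_smul, smul_add]
  module

theorem qinner_eq_innerSL (q v : ℍ) : qinner q v = innerSL ℝ v q := by
  rw [qinner_eq_inner, innerSL_apply_apply, real_inner_comm]

theorem qinner_one (v : ℍ) : qinner 1 v = v.re := by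
  simp [qinner]

theorem hasFDerivAt_exp_qinner (v q : ℍ) :
    HasFDerivAt (fun p => Real.exp (qinner p v)) (Real.exp (qinner q v) • innerSL ℝ v) q := by
  simp only [qinner_eq_innerSL]
  exact (innerSL ℝ v).hasFDerivAt.exp

theorem dbar_exp_qinner_smul {f : ℍ → ℍ} {q i : ℍ} (hf : DifferentiableAt ℝ f q) (hi : i ∈ Sph2)
    (v : ℍ) : dbar i (fun p => Real.exp (qinner p v) • f p) q =
      Real.exp (qinner q v) • (dbar i f q + (1 / 4 : ℝ) • ((v - i * v * i) * f q)) := by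
  have hexp := hasFDerivAt_exp_qinner v q
  rw [dbar_smul hexp.differentiableAt hf, hexp.fderiv, sub_mul_mul_eq_of_mem_Sph2 hi]
  simp only [smul_apply, smul_eq_mul, ← qinner_eq_innerSL, qinner_one, add_mul, smul_mul_assoc,
    Quaternion.coe_mul_eq_smul, smul_add]
  module

theorem VSliceRegularOn.sliceRegularOn_exp_smul {v : ℍ} {f : ℍ → ℍ} {Ω : Set ℍ}
    (hf : VSliceRegularOn v f Ω) (hΩ : IsOpen Ω) :
    SliceRegularOn (fun q => Real.exp (qinner q v) • f q) Ω := by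
  refine ⟨?_, fun i hi q hq => ?_⟩
  · have hexp : ContDiff ℝ 1 (fun p => Real.exp (qinner p v)) := by
      simpa only [qinner_eq_innerSL] using (innerSL ℝ v).contDiff.exp
    exact hexp.contDiffOn.smul hf.1
  · rw [dbar_exp_qinner_smul ((hf.1.differentiableOn one_ne_zero).differentiableAt
      (hΩ.mem_nhds hq.1)) hi, hf.2 i hi q hq, smul_zero]

/-- The splitting `ℍ = ℂ ⊕ ℂ j`. Left multiplication by `ℂ` acts on both components, so a function
that is slice regular on the standard slice becomes a pair of holomorphic functions. -/
def toComplexPair : ℍ →L[ℝ] ℂ × ℂ := LinearMap.toContinuousLinearMap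
  { toFun := fun u => (⟨u.re, u.imI⟩, ⟨u.imJ, u.imK⟩)
    map_add' := fun a b => by simp [Prod.ext_iff, Complex.ext_iff]
    map_smul' := fun c a => by simp [Prod.ext_iff, Complex.ext_iff] }

abbrev quatJ : ℍ := ⟨0, 0, 1, 0⟩

def ofComplexPair : ℂ × ℂ →L[ℝ] ℍ := LinearMap.toContinuousLinearMap
  { toFun := fun c => (c.1 : ℍ) + (c.2 : ℍ) * quatJ
    map_add' := fun a b => by
      ext <;> simp [Quaternion.re_mul, Quaternion.imI_mul, Quaternion.imJ_mul, Quaternion.imK_mul]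
    map_smul' := fun r c => by
      ext <;> simp [Quaternion.re_mul, Quaternion.imI_mul, Quaternion.imJ_mul, Quaternion.imK_mul] }

theorem toComplexPair_apply (u : ℍ) : toComplexPair u = (⟨u.re, u.imI⟩, ⟨u.imJ, u.imK⟩) := rfl

theorem ofComplexPair_apply (c : ℂ × ℂ) :
    ofComplexPair c = (c.1 : ℍ) + (c.2 : ℍ) * quatJ := rfl

theorem ofComplexPair_toComplexPair (u : ℍ) : ofComplexPair (toComplexPair u) = u := by
  ext <;> simp [ofComplexPair_apply, toComplexPair_apply, Quaternion.re_mul, Quaternion.imI_mul,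
    Quaternion.imJ_mul, Quaternion.imK_mul]

theorem toComplexPair_ofComplexPair (c : ℂ × ℂ) : toComplexPair (ofComplexPair c) = c := by
  simp [ofComplexPair_apply, toComplexPair_apply, Quaternion.re_mul, Quaternion.imI_mul,
    Quaternion.imJ_mul, Quaternion.imK_mul]

theorem toComplexPair_coeComplex_mul (z : ℂ) (u : ℍ) :
    toComplexPair (z * u) = z • toComplexPair u := by
  simp [toComplexPair_apply, Prod.ext_iff, Complex.ext_iff, Quaternion.re_mul, Quaternion.imI_mul,
    Quaternion.imJ_mul, Quaternion.imK_mul]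

theorem ofComplexPair_smul (z : ℂ) (c : ℂ × ℂ) :
    ofComplexPair (z • c) = z * ofComplexPair c := by
  rw [← toComplexPair_ofComplexPair c, ← toComplexPair_coeComplex_mul, ofComplexPair_toComplexPair,
    ofComplexPair_toComplexPair]

theorem norm_coeComplex (z : ℂ) : ‖(z : ℍ)‖ = ‖z‖ := by
  rw [← sq_eq_sq₀ (norm_nonneg _) (norm_nonneg _), sq, ← Quaternion.normSq_eq_norm_mul_self,
    Quaternion.normSq_def', Complex.sq_norm, Complex.normSq_apply]
  simp; ring

def coeComplexL : ℂ →L[ℝ] ℍ := LinearMap.toContinuousLinearMap Quaternion.ofComplex.toLinearMap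

theorem coeComplexL_apply (z : ℂ) : coeComplexL z = z := rfl

theorem differentiableAt_toComplexPair_comp {G : ℍ → ℍ} {z : ℂ} (hG : DifferentiableAt ℝ G z)
    (hCR : dbar (Complex.I : ℍ) G z = 0) :
    DifferentiableAt ℂ (fun w : ℂ => toComplexPair (G w)) z := by
  set G' := fderiv ℝ G z
  have hI : G' (Complex.I : ℍ) = Complex.I * G' 1 := by
    have h : G' 1 + (Complex.I : ℍ) * G' (Complex.I : ℍ) = 0 := by
      rw [dbar, smul_eq_zero] at hCR
      exact hCR.resolve_left (by norm_num)
    have hII : (Complex.I : ℍ) * Complex.I = -1 := by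
      rw [← Quaternion.coeComplex_mul, Complex.I_mul_I]; ext <;> simp
    calc G' Complex.I = -((Complex.I : ℍ) * Complex.I) * G' Complex.I := by rw [hII]; simp
      _ = Complex.I * G' 1 := by rw [eq_neg_of_add_eq_zero_left h]; noncomm_ring
  have hlin : ∀ w : ℂ, G' w = w * G' 1 := by
    intro w
    have hw : (w : ℍ) = w.re • (1 : ℍ) + w.im • (Complex.I : ℍ) := by ext <;> simp
    rw [hw, map_add, map_smul, map_smul, hI, add_mul, smul_mul_assoc, smul_mul_assoc, one_mul]
  have hder : HasFDerivAt (fun w : ℂ => toComplexPair (G w))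
      ((toComplexPair.comp G').comp coeComplexL) z :=
    toComplexPair.hasFDerivAt.comp z (hG.hasFDerivAt.comp z coeComplexL.hasFDerivAt)
  refine (hasFDerivAt_of_restrictScalars ℝ hder
    (f' := (1 : ℂ →L[ℂ] ℂ).smulRight (toComplexPair (G' 1))) ?_).differentiableAt
  ext w <;> simp [coeComplexL_apply, hlin, toComplexPair_coeComplex_mul]

theorem exists_hasSum_coeComplex_pow_mul_of_dbar_eq_zero {G : ℍ → ℍ} {R : ℝ≥0} (hR : 0 < R)
    (hG : ∀ z : ℂ, ‖z‖ < R → DifferentiableAt ℝ G z ∧ dbar (Complex.I : ℍ) G z = 0) :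
    ∃ b : ℕ → ℍ, ∀ z : ℂ, ‖z‖ < R →
      Summable (fun n => ‖(z : ℍ) ^ n * b n‖) ∧ HasSum (fun n => (z : ℍ) ^ n * b n) (G z) := by
  set F := fun w : ℂ => toComplexPair (G w)
  have hF : DifferentiableOn ℂ F (ball 0 R) := fun w hw =>
    have hw' : ‖w‖ < R := mem_ball_zero_iff.1 hw
    (differentiableAt_toComplexPair_comp (hG w hw').1 (hG w hw').2).differentiableWithinAt
  have hp := hF.hasFPowerSeriesOnBall_of_ball (half_pos hR) (half_lt_self hR)
  set p := cauchyPowerSeries F 0 ((R / 2 : ℝ≥0) : ℝ)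
  refine ⟨fun n => ofComplexPair (p.coeff n), fun z hz => ?_⟩
  have hz' : z ∈ eball (0 : ℂ) R := by
    rwa [mem_eball_zero_iff, enorm_lt_coe, ← NNReal.coe_lt_coe, coe_nnnorm]
  have hterm : ∀ n, (z : ℍ) ^ n * ofComplexPair (p.coeff n) = ofComplexPair (p n fun _ => z) := by
    intro n
    rw [p.apply_eq_pow_smul_coeff, ofComplexPair_smul, ← Quaternion.coe_ofComplex, map_pow]
  simp only [hterm]
  refine ⟨?_, ?_⟩
  · exact .of_nonneg_of_le (fun n => norm_nonneg _) (fun n => ofComplexPair.le_opNorm _)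
      ((p.summable_norm_apply (eball_subset_eball hp.r_le hz')).mul_left _)
  · simpa [F, ofComplexPair_toComplexPair] using ofComplexPair.hasSum (hp.hasSum hz')

theorem norm_conj {w : ℍ} (hw : w ≠ 0) (q : ℍ) : ‖w * q * w⁻¹‖ = ‖q‖ := by
  rw [norm_mul, norm_mul, norm_inv, mul_comm ‖w‖, mul_assoc,
    mul_inv_cancel₀ (norm_ne_zero_iff.2 hw), mul_one]

theorem conj_coe {w : ℍ} (hw : w ≠ 0) (x : ℝ) : w * (x : ℍ) * w⁻¹ = x := by
  rw [mul_assoc, Quaternion.coe_commutes, ← mul_assoc, mul_inv_cancel₀ hw, one_mul]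

theorem conj_mem_Sph2 {w i : ℍ} (hw : w ≠ 0) (hi : i ∈ Sph2) : w * i * w⁻¹ ∈ Sph2 := by
  refine ⟨?_, by rw [norm_conj hw, hi.2]⟩
  have h0 := hi.1
  rw [Quaternion.inv_def, mul_smul_comm, Quaternion.re_smul]
  simp [Quaternion.re_mul, Quaternion.imI_mul, Quaternion.imJ_mul, Quaternion.imK_mul, h0]
  exact .inr (by ring)

theorem conj_mem_slicePlane {w i q : ℍ} (hw : w ≠ 0) (hq : q ∈ slicePlane i) :
    w * q * w⁻¹ ∈ slicePlane (w * i * w⁻¹) := by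
  obtain ⟨x, y, rfl⟩ := hq
  refine ⟨x, y, ?_⟩
  rw [mul_add, add_mul, conj_coe hw, mul_smul_comm, smul_mul_assoc]

theorem mapsTo_conj_ball {w : ℍ} (hw : w ≠ 0) (r : ℝ) :
    MapsTo (fun q => w * q * w⁻¹) (ball (0 : ℍ) r) (ball 0 r) := fun q hq => by
  simpa only [mem_ball_zero_iff, norm_conj hw] using hq

theorem dbar_conj {g : ℍ → ℍ} {w q : ℍ} (hw : w ≠ 0)
    (hg : DifferentiableAt ℝ g (w * q * w⁻¹)) (i : ℍ) :
    dbar i (fun p => w⁻¹ * g (w * p * w⁻¹)) q = w⁻¹ * dbar (w * i * w⁻¹) g (w * q * w⁻¹) := by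
  have hconj : HasFDerivAt (fun p => w * p * w⁻¹) (ContinuousLinearMap.mulLeftRight ℝ ℍ w w⁻¹) q :=
    (ContinuousLinearMap.mulLeftRight ℝ ℍ w w⁻¹).hasFDerivAt
  have hd := ((ContinuousLinearMap.mul ℝ ℍ w⁻¹).hasFDerivAt).comp q (hg.hasFDerivAt.comp q hconj)
  have hi : i * w⁻¹ = w⁻¹ * (w * i * w⁻¹) := by
    rw [← mul_assoc, ← mul_assoc, inv_mul_cancel₀ hw, one_mul]
  simp only [dbar, Function.comp_def, ContinuousLinearMap.mul_apply'] at hd ⊢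
  rw [hd.fderiv]
  simp only [ContinuousLinearMap.comp_apply, ContinuousLinearMap.mulLeftRight_apply,
    ContinuousLinearMap.mul_apply', mul_one, mul_inv_cancel₀ hw]
  rw [← mul_assoc i, hi, mul_assoc w⁻¹ (w * i * w⁻¹), ← mul_add, mul_smul_comm]

theorem SliceRegularOn.conj {g : ℍ → ℍ} {Ω : Set ℍ} (hg : SliceRegularOn g Ω) (hΩ : IsOpen Ω)
    {w : ℍ} (hw : w ≠ 0) (hwΩ : MapsTo (fun q => w * q * w⁻¹) Ω Ω) :
    SliceRegularOn (fun q => w⁻¹ * g (w * q * w⁻¹)) Ω := by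
  refine ⟨contDiffOn_const.mul
    (hg.1.comp (ContinuousLinearMap.mulLeftRight ℝ ℍ w w⁻¹).contDiff.contDiffOn hwΩ),
    fun i hi q hq => ?_⟩
  have hgd : DifferentiableAt ℝ g (w * q * w⁻¹) :=
    (hg.1.differentiableOn one_ne_zero).differentiableAt (hΩ.mem_nhds (hwΩ hq.1))
  rw [dbar_conj hw hgd, hg.2 _ (conj_mem_Sph2 hw hi) _ ⟨hwΩ hq.1, conj_mem_slicePlane hw hq.2⟩,
    mul_zero]

theorem exists_conj_coeComplex (q : ℍ) : ∃ w ≠ 0, ∃ z : ℂ, q = w * z * w⁻¹ := by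
  set m := ‖q.im‖
  have hm : m ^ 2 = q.imI ^ 2 + q.imJ ^ 2 + q.imK ^ 2 := by
    rw [sq, ← Quaternion.normSq_eq_norm_mul_self, Quaternion.normSq_def']; simp
  suffices ∃ w ≠ 0, q * w = w * (⟨q.re, m⟩ : ℂ) from
    this.imp fun w ⟨hw, hqw⟩ => ⟨hw, _, by rw [← hqw, mul_inv_cancel_right₀ hw]⟩
  by_cases h : q.im + m • (Complex.I : ℍ) = 0
  · have hI : q.imI = -m := by
      linarith [show q.imI + m = 0 by simpa using congrArg QuaternionAlgebra.imI h]
    have hJ : q.imJ = 0 := by simpa using congrArg QuaternionAlgebra.imJ h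
    have hK : q.imK = 0 := by simpa using congrArg QuaternionAlgebra.imK h
    refine ⟨quatJ, fun h => by simpa using congrArg QuaternionAlgebra.imJ h, ?_⟩
    ext <;> simp [Quaternion.re_mul, Quaternion.imI_mul, Quaternion.imJ_mul, Quaternion.imK_mul,
      hI, hJ, hK]
  · refine ⟨_, h, ?_⟩
    ext <;> simp [Quaternion.re_mul, Quaternion.imI_mul, Quaternion.imJ_mul, Quaternion.imK_mul]
    · linear_combination hm
    all_goals ring

theorem coeComplex_I_mem_Sph2 : ((Complex.I : ℂ) : ℍ) ∈ Sph2 :=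
  ⟨by simp, by rw [norm_coeComplex, Complex.norm_I]⟩

theorem coeComplex_mem_slicePlane (z : ℂ) : (z : ℍ) ∈ slicePlane (Complex.I : ℍ) :=
  ⟨z.re, z.im, by ext <;> simp⟩

theorem SliceRegularOn.exists_hasSum_coeComplex_pow_mul {G : ℍ → ℍ} {R : ℝ≥0} (hR : 0 < R)
    (hG : SliceRegularOn G (ball 0 R)) :
    ∃ b : ℕ → ℍ, ∀ z : ℂ, ‖z‖ < R →
      Summable (fun n => ‖(z : ℍ) ^ n * b n‖) ∧ HasSum (fun n => (z : ℍ) ^ n * b n) (G z) :=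
  exists_hasSum_coeComplex_pow_mul_of_dbar_eq_zero hR fun z hz =>
    have hzR : (z : ℍ) ∈ ball (0 : ℍ) R := mem_ball_zero_iff.2 (by rwa [norm_coeComplex])
    ⟨(hG.1.differentiableOn one_ne_zero).differentiableAt (isOpen_ball.mem_nhds hzR),
      hG.2 _ coeComplex_I_mem_Sph2 _ ⟨hzR, coeComplex_mem_slicePlane z⟩⟩

theorem hasSum_coe_pow_smul {b : ℕ → ℍ} {G : ℍ → ℍ} {R : ℝ}
    (h : ∀ z : ℂ, ‖z‖ < R →
      Summable (fun n => ‖(z : ℍ) ^ n * b n‖) ∧ HasSum (fun n => (z : ℍ) ^ n * b n) (G z))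
    (x : ℝ) (hx : ‖x‖ < R) :
    Summable (fun n => ‖x ^ n • b n‖) ∧ HasSum (fun n => x ^ n • b n) (G x) := by
  simpa [← Quaternion.coe_pow, Quaternion.coe_mul_eq_smul] using h x (by rwa [Complex.norm_real])

theorem SliceRegularOn.exists_hasSum_pow_mul {g : ℍ → ℍ} {R : ℝ≥0} (hR : 0 < R)
    (hg : SliceRegularOn g (ball 0 R)) :
    ∃ a : ℕ → ℍ, ∀ q ∈ ball (0 : ℍ) R,
      Summable (fun n => ‖q ^ n * a n‖) ∧ HasSum (fun n => q ^ n * a n) (g q) := by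
  obtain ⟨a, ha⟩ := hg.exists_hasSum_coeComplex_pow_mul hR
  refine ⟨a, fun q hq => ?_⟩
  obtain ⟨w, hw, z, rfl⟩ := exists_conj_coeComplex q
  have hz : ‖z‖ < R := by rwa [mem_ball_zero_iff, norm_conj hw, norm_coeComplex] at hq
  obtain ⟨b, hb⟩ :=
    (hg.conj isOpen_ball hw (mapsTo_conj_ball hw R)).exists_hasSum_coeComplex_pow_mul hR
  -- On the real axis the conjugated function is `w⁻¹ * g`.
  have hab : b = fun n => w⁻¹ * a n := by
    refine eq_of_hasSum_pow_smul hR (g := fun x : ℝ => w⁻¹ * g x) (fun x hx => ?_) (fun x hx => ?_)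
    · simpa [conj_coe hw] using hasSum_coe_pow_smul (G := fun p => w⁻¹ * g (w * p * w⁻¹)) hb x hx
    · obtain ⟨hs, hh⟩ := hasSum_coe_pow_smul ha x hx
      refine ⟨?_, ?_⟩
      · simpa only [← mul_smul_comm, norm_mul] using hs.mul_left ‖w⁻¹‖
      · simpa only [← mul_smul_comm] using hh.mul_left w⁻¹
  have hterm : ∀ n, (w * z * w⁻¹) ^ n * a n = w * ((z : ℍ) ^ n * b n) := by
    intro n
    have hpow := GroupWithZero.conj_pow₀ (s := n) (d := (z : ℍ)) (inv_ne_zero hw)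
    rw [inv_inv] at hpow
    rw [hab, hpow]
    simp only [mul_assoc]
  simp only [hterm]
  obtain ⟨hs, hh⟩ := hb z hz
  refine ⟨?_, ?_⟩
  · simpa [norm_mul] using hs.mul_left ‖w‖
  · simpa [mul_inv_cancel_left₀ hw] using hh.mul_left w

theorem pow_mul_mul_star_add_pow_mul (q v a : ℍ) (m k : ℕ) :
    q ^ m * (v * star q + q * star v) ^ k * (((-1 : ℝ) ^ k / (2 ^ k * k.factorial)) • a) =
      ((-qinner q v) ^ k / k.factorial) • (q ^ m * a) := by
  rw [mul_star_add_mul_star, ← Quaternion.coe_pow, mul_assoc, Quaternion.coe_mul_eq_smul,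
    smul_smul, mul_smul_comm]
  congr 1
  rw [mul_pow, neg_pow]
  field_simp
  ring

/-- power series expansion on the unit ball for `v`-slice regular
functions. -/
theorem stmt17 (v : ℍ[ℝ]) (f : ℍ[ℝ] → ℍ[ℝ])
    (hf : VSliceRegularOn v f (Metric.ball (0 : ℍ[ℝ]) 1)) :
    ∃ a : ℕ → ℍ[ℝ], ∀ q ∈ Metric.ball (0 : ℍ[ℝ]) 1,
      f q = ∑' n : ℕ, ∑ k ∈ Finset.range (n + 1),
        q ^ (n - k) * (v * star q + q * star v) ^ k *
          (((-1 : ℝ) ^ k / (2 ^ k * (Nat.factorial k))) • a (n - k)) := by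
  obtain ⟨a, ha⟩ := (hf.sliceRegularOn_exp_smul isOpen_ball).exists_hasSum_pow_mul
    (R := 1) one_pos
  refine ⟨a, fun q hq => ?_⟩
  obtain ⟨hs, hsum⟩ := ha q (by simpa using hq)
  have hfq : f q = Real.exp (-qinner q v) • (Real.exp (qinner q v) • f q) := by
    rw [smul_smul, ← Real.exp_add, neg_add_cancel, Real.exp_zero, one_smul]
  rw [hfq, ← hsum.tsum_eq, exp_smul_tsum_eq_tsum_sum_range hs]
  simp only [pow_mul_mul_star_add_pow_mul]
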